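/- arXiv:math-ph/0009002 — 5 statements merged into one kernel-verified Lean document; each statement's English description precedes it below -/
import Mathlib

section
/- Let H be a bounded self-adjoint operator and P an orthogonal projection on a Hilbert space. For any nonzero vector ψ, the Rayleigh quotient satisfies ρ(ψ, PHP) ≤ ρ(ψ, H) + 2‖[P,[P,H]]‖ · (‖Pψ‖·‖(1-P)ψ‖)/‖ψ‖², where ρ(ψ,X) = ⟨ψ,Xψ⟩/⟨ψ,ψ⟩, provided H ≥ 0. -/
/-- For a bounded nonnegative self-adjoint operator `H`, an orthogonal
projection `P`, and a nonzero vector `ψ`, the Rayleigh quotient satisfies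
`ρ(ψ, PHP) ≤ ρ(ψ, H) + 2‖[P,[P,H]]‖ ‖Pψ‖ ‖(1-P)ψ‖ / ‖ψ‖²`. -/
theorem rayleigh_proj_conj_le
    {E : Type*} [NormedAddCommGroup E] [InnerProductSpace ℂ E] [CompleteSpace E]
    (H P : E →L[ℂ] E) (hH : IsSelfAdjoint H)
    (hHpos : ∀ ψ : E, 0 ≤ (inner ℂ ψ (H ψ) : ℂ).re)
    (hP2 : P * P = P) (hPsa : IsSelfAdjoint P)
    (ψ : E) (hψ : ψ ≠ 0) :
    (inner ℂ ψ ((P * H * P) ψ) : ℂ).re / ‖ψ‖ ^ 2 ≤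
      (inner ℂ ψ (H ψ) : ℂ).re / ‖ψ‖ ^ 2 +
      2 * ‖P * (P * H - H * P) - (P * H - H * P) * P‖ *
        (‖P ψ‖ * ‖(1 - P) ψ‖) / ‖ψ‖ ^ 2 := by
  have hc : (0:ℝ) < ‖ψ‖ ^ 2 := pow_pos (norm_pos_iff.mpr hψ) 2
  set K : E →L[ℂ] E := P * (P * H - H * P) - (P * H - H * P) * P with hKdef
  set u : E := P ψ with hu
  set w : E := (1 - P) ψ with hw
  rw [← add_div, div_le_div_iff_of_pos_right hc]
  have hsum : ψ = u + w := by
    simp [hu, hw, ContinuousLinearMap.sub_apply, ContinuousLinearMap.one_apply]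
  have hPinner : ∀ x y : E, (inner ℂ (P x) y : ℂ) = inner ℂ x (P y) := fun x y => hPsa.isSymmetric x y
  have hHinner : ∀ x y : E, (inner ℂ (H x) y : ℂ) = inner ℂ x (H y) := fun x y => hH.isSymmetric x y
  have h1 : (inner ℂ ψ ((P * H * P) ψ) : ℂ) = inner ℂ u (H u) := by
    have e : (P * H * P) ψ = P (H (P ψ)) := rfl
    rw [e, ← hPinner ψ (H (P ψ))]
  have hop : P * H * (1 - P) = P * K * (1 - P) := by
    rw [hKdef]
    noncomm_ring
    simp only [← mul_assoc, hP2]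
    noncomm_ring
  have h2 : (inner ℂ u (H w) : ℂ) = inner ℂ u (K w) := by
    have e1 : (inner ℂ u (H w) : ℂ) = inner ℂ ψ ((P * H * (1 - P)) ψ) := by
      rw [hu, hw, hPinner ψ]; rfl
    have e2 : (inner ℂ ψ ((P * K * (1 - P)) ψ) : ℂ) = inner ℂ u (K w) := by
      rw [hu, hw, hPinner ψ]; rfl
    rw [e1, hop, e2]
  have hb : |(inner ℂ u (K w) : ℂ).re| ≤ ‖K‖ * (‖u‖ * ‖w‖) := by
    calc |(inner ℂ u (K w) : ℂ).re| ≤ ‖(inner ℂ u (K w) : ℂ)‖ := Complex.abs_re_le_norm _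
      _ ≤ ‖u‖ * ‖K w‖ := norm_inner_le_norm _ _
      _ ≤ ‖u‖ * (‖K‖ * ‖w‖) := by gcongr; exact K.le_opNorm w
      _ = ‖K‖ * (‖u‖ * ‖w‖) := by ring
  have hexp : (inner ℂ ψ (H ψ) : ℂ).re
      = (inner ℂ u (H u) : ℂ).re + 2 * (inner ℂ u (H w) : ℂ).re + (inner ℂ w (H w) : ℂ).re := by
    have hwu : (inner ℂ w (H u) : ℂ).re = (inner ℂ u (H w) : ℂ).re := by
      have e : (inner ℂ w (H u) : ℂ) = starRingEnd ℂ (inner ℂ u (H w)) := by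
        rw [← inner_conj_symm, hHinner]
      rw [e, Complex.conj_re]
    rw [hsum]
    simp only [map_add, inner_add_add_self, inner_add_left, inner_add_right, Complex.add_re]
    rw [hwu]; ring
  have h2re : (inner ℂ u (H w) : ℂ).re = (inner ℂ u (K w) : ℂ).re := by rw [h2]
  have hpos : 0 ≤ (inner ℂ w (H w) : ℂ).re := hHpos w
  rw [h1, hexp]
  have := abs_le.mp hb
  linarith [this.1, this.2]
end

section
/- Let {f_n : n ∈ ℤ} be unit vectors in a Hilbert space with |⟨f_n, f_m⟩| ≤ C ε^{|n-m|} for all n ≠ m, where C < ∞ and 0 ≤ ε < 1 satisfy (1+2C)ε < 1. Then the Gram operator E with entries E_{mn} = ⟨f_m, f_n⟩ satisfies ‖E - I‖ ≤ 2Cε/(1-ε); in particular the family {f_n} is linearly independent. -/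
open scoped ComplexConjugate ENNReal NNReal

noncomputable section GramAux

lemma summable_shift (x : lp (fun _ : ℤ => ℂ) 2) (k : ℤ) :
    Summable fun m : ℤ => ‖x (m - k)‖ ^ ((2:ℝ≥0∞)).toReal := by
  have h : Summable fun m : ℤ => ‖x m‖ ^ ((2:ℝ≥0∞)).toReal :=
    (lp.memℓp x).summable (by norm_num)
  exact ((Equiv.subRight k).summable_iff
    (f := fun m : ℤ => ‖x m‖ ^ ((2:ℝ≥0∞)).toReal)).mpr h

lemma pointwise_le {c : ℤ → ℂ} {B : ℝ} (hc : ∀ m, ‖c m‖ ≤ B) (k : ℤ)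
    (x : lp (fun _ : ℤ => ℂ) 2) (m : ℤ) :
    ‖c m * x (m - k)‖ ^ ((2:ℝ≥0∞)).toReal
      ≤ B ^ ((2:ℝ≥0∞)).toReal * ‖x (m - k)‖ ^ ((2:ℝ≥0∞)).toReal := by
  have hB : 0 ≤ B := le_trans (norm_nonneg (c 0)) (hc 0)
  rw [← Real.mul_rpow hB (norm_nonneg _)]
  apply Real.rpow_le_rpow (norm_nonneg _) _ (by norm_num)
  calc ‖c m * x (m - k)‖ = ‖c m‖ * ‖x (m - k)‖ := norm_mul _ _
  _ ≤ B * ‖x (m - k)‖ := mul_le_mul_of_nonneg_right (hc m) (norm_nonneg _)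

lemma memℓp_shiftMul {c : ℤ → ℂ} {B : ℝ} (hc : ∀ m, ‖c m‖ ≤ B) (k : ℤ)
    (x : lp (fun _ : ℤ => ℂ) 2) :
    Memℓp (fun m => c m * x (m - k)) 2 := by
  apply memℓp_gen
  exact Summable.of_nonneg_of_le (fun m => by positivity) (pointwise_le hc k x)
    ((summable_shift x k).mul_left _)

def shiftMulL (c : ℤ → ℂ) (B : ℝ) (hc : ∀ m, ‖c m‖ ≤ B) (k : ℤ) :
    lp (fun _ : ℤ => ℂ) 2 →L[ℂ] lp (fun _ : ℤ => ℂ) 2 :=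
  LinearMap.mkContinuous
    { toFun := fun x => (⟨fun m => c m * x (m - k), memℓp_shiftMul hc k x⟩ : lp (fun _ : ℤ => ℂ) 2)
      map_add' := fun x y => lp.ext (funext fun m => by
        show c m * (x + y) (m - k) = _
        rw [lp.coeFn_add]
        show _ = c m * x (m - k) + c m * y (m - k)
        simp; ring)
      map_smul' := fun a x => lp.ext (funext fun m => by
        show c m * (a • x) (m - k)
          = (a • (⟨fun m => c m * x (m-k), memℓp_shiftMul hc k x⟩ : lp (fun _ : ℤ => ℂ) 2)) m
        rw [lp.coeFn_smul, lp.coeFn_smul]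
        simp [smul_eq_mul]; ring) }
    B
    (fun x => by
      have hB : 0 ≤ B := le_trans (norm_nonneg (c 0)) (hc 0)
      apply lp.norm_le_of_tsum_le (by norm_num) (by positivity)
      have hsum1 : Summable fun m : ℤ => ‖c m * x (m - k)‖ ^ ((2:ℝ≥0∞)).toReal :=
        Summable.of_nonneg_of_le (fun m => by positivity) (pointwise_le hc k x)
          ((summable_shift x k).mul_left _)
      calc ∑' m : ℤ, ‖c m * x (m - k)‖ ^ ((2:ℝ≥0∞)).toReal
          ≤ ∑' m : ℤ, B ^ ((2:ℝ≥0∞)).toReal * ‖x (m - k)‖ ^ ((2:ℝ≥0∞)).toReal :=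
            Summable.tsum_le_tsum (pointwise_le hc k x) hsum1 ((summable_shift x k).mul_left _)
        _ = B ^ ((2:ℝ≥0∞)).toReal * ∑' m : ℤ, ‖x (m - k)‖ ^ ((2:ℝ≥0∞)).toReal := tsum_mul_left
        _ = B ^ ((2:ℝ≥0∞)).toReal * ∑' m : ℤ, ‖x m‖ ^ ((2:ℝ≥0∞)).toReal := by
            congr 1
            exact (Equiv.subRight k).tsum_eq (fun m => ‖x m‖ ^ ((2:ℝ≥0∞)).toReal)
        _ = B ^ ((2:ℝ≥0∞)).toReal * ‖x‖ ^ ((2:ℝ≥0∞)).toReal := by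
            rw [← lp.norm_rpow_eq_tsum (by norm_num) x]
        _ = (B * ‖x‖) ^ ((2:ℝ≥0∞)).toReal := (Real.mul_rpow hB (norm_nonneg _)).symm)

lemma shiftMulL_apply (c : ℤ → ℂ) (B : ℝ) (hc : ∀ m, ‖c m‖ ≤ B) (k : ℤ)
    (x : lp (fun _ : ℤ => ℂ) 2) (m : ℤ) :
    (shiftMulL c B hc k x) m = c m * x (m - k) := rfl

lemma norm_shiftMulL_le (c : ℤ → ℂ) (B : ℝ) (hc : ∀ m, ‖c m‖ ≤ B) (k : ℤ) :
    ‖shiftMulL c B hc k‖ ≤ B :=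
  LinearMap.mkContinuous_norm_le _ (le_trans (norm_nonneg (c 0)) (hc 0)) _

end GramAux

set_option maxHeartbeats 1000000 in
/-- For unit vectors `f n`, `n ∈ ℤ`, with `|⟨f n, f m⟩| ≤ C ε^{|n-m|}` for
`n ≠ m` and `(1+2C)ε < 1`, the Gram operator `E` on `ℓ²(ℤ)` with matrix entries
`E_{mn} = ⟨f m, f n⟩` satisfies `‖E - 1‖ ≤ 2Cε/(1-ε)`; in particular the family `f`
is linearly independent. -/
theorem gram_operator_close_to_identity
    {E : Type*} [NormedAddCommGroup E] [InnerProductSpace ℂ E] [CompleteSpace E]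
    (f : ℤ → E) (hnorm : ∀ n, ‖f n‖ = 1) (C ε : ℝ) (hε0 : 0 ≤ ε) (hε1 : ε < 1)
    (hbound : ∀ n m : ℤ, n ≠ m →
      ‖(inner ℂ (f n) (f m) : ℂ)‖ ≤ C * ε ^ (n - m).natAbs)
    (hsmall : (1 + 2 * C) * ε < 1) :
    (∃ G : lp (fun _ : ℤ => ℂ) 2 →L[ℂ] lp (fun _ : ℤ => ℂ) 2,
      (∀ m n : ℤ, (inner ℂ (lp.single 2 m (1 : ℂ)) (G (lp.single 2 n (1 : ℂ))) : ℂ)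
          = (inner ℂ (f m) (f n) : ℂ)) ∧
      ‖G - 1‖ ≤ 2 * C * ε / (1 - ε)) ∧
    LinearIndependent ℂ f := by
  classical
  set c : ℤ → ℤ → ℂ := fun k m => if k = 0 then 0 else inner ℂ (f m) (f (m - k)) with hc_def
  set b : ℤ → ℝ := fun k => if k = 0 then 0 else C * ε ^ k.natAbs with hb_def
  have hcb : ∀ k m, ‖c k m‖ ≤ b k := by
    intro k m
    by_cases hk : k = 0
    · simp [hc_def, hb_def, hk]
    · simp only [hc_def, hb_def, if_neg hk]
      have hmne : m ≠ m - k := by omega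
      have := hbound m (m - k) hmne
      rwa [sub_sub_cancel] at this
  -- summability of b
  have hgeo : HasSum (fun n : ℕ => C * ε * ε ^ n) (C * ε * (1 - ε)⁻¹) :=
    (hasSum_geometric_of_lt_one hε0 hε1).mul_left _
  have hpos1 : HasSum (fun n : ℕ => b (((n + 1 : ℕ) : ℤ))) (C * ε * (1 - ε)⁻¹) := by
    convert hgeo using 2 with n
    have h1 : (((n + 1 : ℕ) : ℤ)) ≠ 0 := by omega
    have h2 : (((n + 1 : ℕ) : ℤ)).natAbs = n + 1 := by omega
    simp only [hb_def, if_neg h1, h2, pow_succ]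
    ring
  have hnat : HasSum (fun n : ℕ => b (n : ℤ)) (C * ε * (1 - ε)⁻¹) := by
    have h := (hasSum_nat_add_iff (f := fun n : ℕ => b (n : ℤ)) 1).mp hpos1
    simpa [hb_def] using h
  have hneg : HasSum (fun n : ℕ => b (-((n : ℤ) + 1))) (C * ε * (1 - ε)⁻¹) := by
    convert hgeo using 2 with n
    have h1 : (-((n : ℤ) + 1)) ≠ 0 := by omega
    have h2 : (-((n : ℤ) + 1)).natAbs = n + 1 := by omega
    simp only [hb_def, if_neg h1, h2, pow_succ]
    ring
  have hbsum : HasSum b (2 * C * ε / (1 - ε)) := by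
    have h := HasSum.of_nat_of_neg_add_one hnat hneg
    have he : (1 : ℝ) - ε ≠ 0 := by linarith
    convert h using 1
    field_simp
    ring
  set T : ℤ → (lp (fun _ : ℤ => ℂ) 2 →L[ℂ] lp (fun _ : ℤ => ℂ) 2) :=
    fun k => shiftMulL (c k) (b k) (hcb k) k with hT_def
  have hTnorm : ∀ k, ‖T k‖ ≤ b k := fun k => norm_shiftMulL_le _ _ _ _
  have hTsum : Summable T := Summable.of_norm_bounded (g := b) hbsum.summable hTnorm
  set A : lp (fun _ : ℤ => ℂ) 2 →L[ℂ] lp (fun _ : ℤ => ℂ) 2 := ∑' k, T k with hA_def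
  have hAnorm : ‖A‖ ≤ 2 * C * ε / (1 - ε) := by
    have hsn : Summable fun k => ‖T k‖ :=
      Summable.of_nonneg_of_le (fun k => norm_nonneg _) hTnorm hbsum.summable
    calc ‖A‖ ≤ ∑' k, ‖T k‖ := norm_tsum_le_tsum_norm hsn
      _ ≤ ∑' k, b k := Summable.tsum_le_tsum hTnorm hsn hbsum.summable
      _ = 2 * C * ε / (1 - ε) := hbsum.tsum_eq
  set G : lp (fun _ : ℤ => ℂ) 2 →L[ℂ] lp (fun _ : ℤ => ℂ) 2 := 1 + A with hG_def
  have hGsub : G - 1 = A := by rw [hG_def]; abel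
  -- matrix entries of A
  have hAentry : ∀ m n : ℤ,
      (inner ℂ (lp.single 2 m (1 : ℂ)) (A (lp.single 2 n (1 : ℂ))) : ℂ) = c (m - n) m := by
    intro m n
    set em : lp (fun _ : ℤ => ℂ) 2 := lp.single 2 m (1 : ℂ) with hem
    set en : lp (fun _ : ℤ => ℂ) 2 := lp.single 2 n (1 : ℂ) with hen
    set φ : (lp (fun _ : ℤ => ℂ) 2 →L[ℂ] lp (fun _ : ℤ => ℂ) 2) →L[ℂ] ℂ :=
      (innerSL ℂ em).comp (ContinuousLinearMap.apply ℂ (lp (fun _ : ℤ => ℂ) 2) en) with hφ_def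
    have hsum : HasSum (fun k => φ (T k)) (φ A) := hTsum.hasSum.mapL φ
    have hval : ∀ k, φ (T k) = if k = m - n then c (m - n) m else 0 := by
      intro k
      have h1 : φ (T k) = (inner ℂ em (T k en) : ℂ) := rfl
      rw [h1, lp.inner_single_left]
      have h2 : (T k en) m = c k m * en (m - k) := rfl
      rw [h2]
      by_cases hk : k = m - n
      · subst hk
        have : m - (m - n) = n := by omega
        rw [this]
        simp [en, lp.single_apply_self, RCLike.inner_apply]
      · have hne : m - k ≠ n := by omega
        rw [lp.single_apply_ne 2 n _ hne, if_neg hk]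
        simp [RCLike.inner_apply]
    have huniq : HasSum (fun k => φ (T k)) (c (m - n) m) := by
      rw [funext hval]
      exact hasSum_ite_eq (m - n) (c (m - n) m)
    exact hsum.unique huniq
  -- matrix entries of G
  have hGentry : ∀ m n : ℤ,
      (inner ℂ (lp.single 2 m (1 : ℂ)) (G (lp.single 2 n (1 : ℂ))) : ℂ)
        = (inner ℂ (f m) (f n) : ℂ) := by
    intro m n
    have h1 : G (lp.single 2 n (1 : ℂ))
        = lp.single 2 n (1 : ℂ) + A (lp.single 2 n (1 : ℂ)) := by
      rw [hG_def]; simp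
    rw [h1, inner_add_right, hAentry]
    rw [lp.inner_single_left]
    by_cases hmn : m = n
    · subst hmn
      simp only [hc_def, sub_self, if_pos rfl, add_zero]
      rw [lp.single_apply_self]
      have : (inner ℂ (f m) (f m) : ℂ) = (‖f m‖ : ℂ) ^ 2 := inner_self_eq_norm_sq_to_K (f m)
      rw [this, hnorm m]
      simp [RCLike.inner_apply]
    · have hk : m - n ≠ 0 := by omega
      rw [lp.single_apply_ne 2 n _ hmn]
      simp only [hc_def, if_neg hk, sub_sub_cancel]
      simp [RCLike.inner_apply]
  refine ⟨⟨G, hGentry, by rw [hGsub]; exact hAnorm⟩, ?_⟩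
  -- linear independence
  have hr1 : 2 * C * ε / (1 - ε) < 1 := by
    rw [div_lt_one (by linarith)]
    nlinarith
  rw [linearIndependent_iff]
  intro l hl
  have hl' : ∑ n ∈ l.support, l n • f n = 0 := by
    rwa [Finsupp.linearCombination_apply, Finsupp.sum] at hl
  set x : lp (fun _ : ℤ => ℂ) 2 :=
    ∑ n ∈ l.support, l n • lp.single 2 n (1 : ℂ) with hx_def
  have hGx : G x = 0 := by
    apply lp.ext
    funext p
    have h1 : (inner ℂ (lp.single 2 p (1 : ℂ)) (G x) : ℂ) = (G x) p := by
      rw [lp.inner_single_left]; simp [RCLike.inner_apply]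
    have h2 : (inner ℂ (lp.single 2 p (1 : ℂ)) (G x) : ℂ) = 0 := by
      rw [hx_def, map_sum, inner_sum]
      have : ∀ n ∈ l.support,
          (inner ℂ (lp.single 2 p (1 : ℂ)) (G (l n • lp.single 2 n (1 : ℂ))) : ℂ)
            = l n * (inner ℂ (f p) (f n) : ℂ) := by
        intro n _
        rw [map_smul, inner_smul_right, hGentry]
      rw [Finset.sum_congr rfl this]
      have h3 : ∑ n ∈ l.support, l n * (inner ℂ (f p) (f n) : ℂ)
          = (inner ℂ (f p) (∑ n ∈ l.support, l n • f n) : ℂ) := by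
        rw [inner_sum]
        exact Finset.sum_congr rfl fun n _ => (inner_smul_right _ _ _).symm
      rw [h3, hl', inner_zero_right]
    show (G x) p = (0 : lp (fun _ : ℤ => ℂ) 2) p
    rw [← h1, h2, lp.coeFn_zero]
    simp
  have hx0 : x = 0 := by
    by_contra hne
    have hxpos : 0 < ‖x‖ := norm_pos_iff.mpr hne
    have hxeq : (1 - G) x = x := by
      simp [ContinuousLinearMap.sub_apply, hGx]
    have hle : ‖x‖ ≤ ‖G - 1‖ * ‖x‖ := by
      calc ‖x‖ = ‖(1 - G) x‖ := by rw [hxeq]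
        _ ≤ ‖(1 : lp (fun _ : ℤ => ℂ) 2 →L[ℂ] lp (fun _ : ℤ => ℂ) 2) - G‖ * ‖x‖ :=
            (1 - G).le_opNorm x
        _ = ‖G - 1‖ * ‖x‖ := by rw [← norm_neg (1 - G), neg_sub]
    have hGn : ‖G - 1‖ ≤ 2 * C * ε / (1 - ε) := by rw [hGsub]; exact hAnorm
    nlinarith
  ext p
  have h1 : (inner ℂ (lp.single 2 p (1 : ℂ)) x : ℂ) = l p := by
    rw [hx_def, inner_sum]
    have : ∀ n ∈ l.support,
        (inner ℂ (lp.single 2 p (1 : ℂ)) (l n • (lp.single 2 n (1 : ℂ) : lp (fun _ : ℤ => ℂ) 2)) : ℂ)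
          = if p = n then l n else 0 := by
      intro n _
      rw [inner_smul_right, lp.inner_single_left]
      by_cases hpn : p = n
      · subst hpn; rw [lp.single_apply_self]; simp [RCLike.inner_apply]
      · rw [lp.single_apply_ne 2 n _ hpn]; simp [RCLike.inner_apply, hpn]
    rw [Finset.sum_congr rfl this, Finset.sum_ite_eq]
    by_cases hp : p ∈ l.support
    · rw [if_pos hp]
    · rw [if_neg hp]
      exact (Finsupp.notMem_support_iff.mp hp).symm
  rw [hx0, inner_zero_right] at h1
  exact h1.symm
end

section
/- Let {f_n} be unit vectors in a Hilbert space with |⟨f_n,f_m⟩| ≤ Cε^{|n-m|} for n≠m and δ := 2Cε/(1-ε) < 1. Then for any finite linear combination ψ = Σ_n α_n f_n, one has ‖ψ‖² ≥ (1-δ) Σ_n |α_n|². -/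
open Finset

lemma geom_tail_le (ε : ℝ) (hε0 : 0 ≤ ε) (hε1 : ε < 1) (T : Finset ℕ)
    (hT : ∀ k ∈ T, 1 ≤ k) : ∑ k ∈ T, ε ^ k ≤ ε / (1 - ε) := by
  set N := T.sup id + 1 with hN
  have hsub : T ⊆ (Finset.range N).image (· + 1) := by
    intro k hk
    simp only [Finset.mem_image, Finset.mem_range]
    have h1 := hT k hk
    have h2 : k ≤ T.sup id := Finset.le_sup (f := id) hk
    exact ⟨k - 1, by omega, by omega⟩
  have h1ε : 0 < 1 - ε := by linarith
  calc ∑ k ∈ T, ε ^ k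
      ≤ ∑ k ∈ (Finset.range N).image (· + 1), ε ^ k :=
        Finset.sum_le_sum_of_subset_of_nonneg hsub (fun i _ _ => pow_nonneg hε0 i)
    _ = ∑ j ∈ Finset.range N, ε ^ (j + 1) :=
        Finset.sum_image (by intro x _ y _ h; simp only at h; omega)
    _ = ε * ∑ j ∈ Finset.range N, ε ^ j := by
        rw [Finset.mul_sum]; exact Finset.sum_congr rfl fun j _ => by ring
    _ ≤ ε * (1 / (1 - ε)) := by
        refine mul_le_mul_of_nonneg_left ?_ hε0
        rw [geom_sum_eq (by linarith), show (ε ^ N - 1) / (ε - 1) = (1 - ε ^ N) / (1 - ε) by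
          rw [← neg_div_neg_eq]; ring_nf]
        gcongr
        nlinarith [pow_nonneg hε0 N]
    _ = ε / (1 - ε) := by ring

lemma erase_sum_pow_le (ε : ℝ) (hε0 : 0 ≤ ε) (hε1 : ε < 1) (s : Finset ℤ) (n : ℤ) :
    ∑ m ∈ s.erase n, ε ^ (n - m).natAbs ≤ 2 * (ε / (1 - ε)) := by
  rw [← Finset.sum_filter_add_sum_filter_not (s.erase n) (· < n)]
  have h1 : ∑ m ∈ (s.erase n).filter (· < n), ε ^ (n - m).natAbs ≤ ε / (1 - ε) := by
    rw [← Finset.sum_image (g := fun m => (n - m).natAbs) (f := fun k => (ε : ℝ) ^ k)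
      (by intro x hx y hy h
          simp only [Finset.coe_filter, Finset.mem_coe, Set.mem_setOf_eq, Finset.mem_filter, Finset.mem_erase] at hx hy
          have h' : (n - x).natAbs = (n - y).natAbs := h
          omega)]
    refine geom_tail_le ε hε0 hε1 _ ?_
    intro k hk
    simp only [Finset.mem_image, Finset.mem_filter, Finset.mem_erase] at hk
    obtain ⟨m, ⟨⟨hne, _⟩, hlt⟩, rfl⟩ := hk
    omega
  have h2 : ∑ m ∈ (s.erase n).filter (¬ · < n), ε ^ (n - m).natAbs ≤ ε / (1 - ε) := by
    rw [← Finset.sum_image (g := fun m => (n - m).natAbs) (f := fun k => (ε : ℝ) ^ k)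
      (by intro x hx y hy h
          simp only [Finset.coe_filter, Finset.mem_coe, Set.mem_setOf_eq, Finset.mem_filter, Finset.mem_erase] at hx hy
          have h' : (n - x).natAbs = (n - y).natAbs := h
          omega)]
    refine geom_tail_le ε hε0 hε1 _ ?_
    intro k hk
    simp only [Finset.mem_image, Finset.mem_filter, Finset.mem_erase] at hk
    obtain ⟨m, ⟨⟨hne, _⟩, hlt⟩, rfl⟩ := hk
    omega
  linarith

lemma offdiag_swap (s : Finset ℤ) (F : ℤ → ℤ → ℝ) :
    ∑ n ∈ s, ∑ m ∈ s.erase n, F n m = ∑ n ∈ s, ∑ m ∈ s.erase n, F m n := by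
  have step : ∀ (G : ℤ → ℤ → ℝ), ∀ n, ∑ m ∈ s.erase n, G n m
      = ∑ m ∈ s, if m = n then 0 else G n m := by
    intro G n
    rw [show (∑ m ∈ s.erase n, G n m)
        = ∑ m ∈ s.erase n, (if m = n then 0 else G n m) from
      Finset.sum_congr rfl fun m hm => by rw [if_neg (Finset.mem_erase.mp hm).1]]
    exact Finset.sum_erase s (if_pos rfl)
  calc ∑ n ∈ s, ∑ m ∈ s.erase n, F n m
      = ∑ n ∈ s, ∑ m ∈ s, if m = n then 0 else F n m :=
        Finset.sum_congr rfl fun n _ => step F n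
    _ = ∑ m ∈ s, ∑ n ∈ s, if m = n then 0 else F n m := Finset.sum_comm
    _ = ∑ n ∈ s, ∑ m ∈ s.erase n, F m n := by
        refine Finset.sum_congr rfl fun n _ => ?_
        rw [step (fun a b => F b a) n]
        refine Finset.sum_congr rfl fun m hm => ?_
        rcases eq_or_ne m n with h | h
        · simp [h]
        · rw [if_neg h, if_neg (Ne.symm h)]

theorem aux_bound
    {E : Type*} [NormedAddCommGroup E] [InnerProductSpace ℂ E]
    (f : ℤ → E) (hnorm : ∀ n, ‖f n‖ = 1) (C ε : ℝ) (hε0 : 0 ≤ ε) (hε1 : ε < 1)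
    (hC : 0 ≤ C)
    (hbound : ∀ n m : ℤ, n ≠ m →
      ‖(inner ℂ (f n) (f m) : ℂ)‖ ≤ C * ε ^ (n - m).natAbs)
    (s : Finset ℤ) (α : ℤ → ℂ) :
    (1 - 2 * C * ε / (1 - ε)) * ∑ n ∈ s, ‖α n‖ ^ 2 ≤
      ‖∑ n ∈ s, α n • f n‖ ^ 2 := by
  have h1ε : 0 < 1 - ε := by linarith
  set t : ℤ → ℤ → ℝ :=
    fun n m => ((starRingEnd ℂ) (α n) * α m * (inner ℂ (f n) (f m) : ℂ)).re with ht
  set w : ℤ → ℤ → ℝ := fun n m => C * ε ^ (n - m).natAbs with hw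
  have hwsymm : ∀ n m : ℤ, w n m = w m n := by
    intro n m
    have h : (n - m).natAbs = (m - n).natAbs := by omega
    simp only [hw, h]
  have hwnonneg : ∀ n m : ℤ, 0 ≤ w n m := fun n m => by
    have := pow_nonneg hε0 (n - m).natAbs; positivity
  have expand : ‖∑ n ∈ s, α n • f n‖ ^ 2 = ∑ n ∈ s, ∑ m ∈ s, t n m := by
    simp only [ht]
    rw [← inner_self_eq_norm_sq (𝕜 := ℂ), sum_inner]
    simp [inner_sum, inner_smul_left, inner_smul_right, mul_assoc]
    rw [← Finset.sum_sub_distrib]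
    refine Finset.sum_congr rfl fun n _ => ?_
    rw [← Finset.sum_sub_distrib]
    exact Finset.sum_congr rfl fun m _ => by ring
  have diag : ∀ n ∈ s, t n n = ‖α n‖ ^ 2 := by
    intro n _
    simp only [ht]
    rw [inner_self_eq_norm_sq_to_K, hnorm]
    simp [Complex.normSq_eq_norm_sq, ← Complex.sq_norm, Complex.mul_re, Complex.normSq,
      Complex.sq_norm]
  have cross : ∀ n m : ℤ, n ≠ m → -(‖α n‖ * ‖α m‖ * w n m) ≤ t n m := by
    intro n m hne
    have h1 : |t n m| ≤ ‖α n‖ * ‖α m‖ * ‖(inner ℂ (f n) (f m) : ℂ)‖ := by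
      calc |t n m| ≤ ‖(starRingEnd ℂ) (α n) * α m * (inner ℂ (f n) (f m) : ℂ)‖ :=
            Complex.abs_re_le_norm _
        _ = ‖α n‖ * ‖α m‖ * ‖(inner ℂ (f n) (f m) : ℂ)‖ := by simp [norm_mul]
    have h2 : ‖α n‖ * ‖α m‖ * ‖(inner ℂ (f n) (f m) : ℂ)‖ ≤ ‖α n‖ * ‖α m‖ * w n m :=
      mul_le_mul_of_nonneg_left (hbound n m hne) (by positivity)
    have := abs_le.mp h1
    linarith
  -- the error term bound
  have key : ∑ n ∈ s, ∑ m ∈ s.erase n, (‖α n‖ * ‖α m‖ * w n m)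
      ≤ (2 * C * ε / (1 - ε)) * ∑ n ∈ s, ‖α n‖ ^ 2 := by
    have step1 : ∑ n ∈ s, ∑ m ∈ s.erase n, (‖α n‖ * ‖α m‖ * w n m)
        ≤ ∑ n ∈ s, ∑ m ∈ s.erase n,
          (‖α n‖ ^ 2 / 2 * w n m + ‖α m‖ ^ 2 / 2 * w n m) := by
      refine Finset.sum_le_sum fun n _ => Finset.sum_le_sum fun m _ => ?_
      nlinarith [sq_nonneg (‖α n‖ - ‖α m‖), hwnonneg n m]
    have step2 : ∑ n ∈ s, ∑ m ∈ s.erase n, (‖α m‖ ^ 2 / 2 * w n m)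
        = ∑ n ∈ s, ∑ m ∈ s.erase n, (‖α n‖ ^ 2 / 2 * w n m) := by
      rw [offdiag_swap s (fun n m => ‖α m‖ ^ 2 / 2 * w n m)]
      exact Finset.sum_congr rfl fun n _ => Finset.sum_congr rfl fun m _ => by
        rw [hwsymm m n]
    have step3 : ∑ n ∈ s, ∑ m ∈ s.erase n, (‖α n‖ ^ 2 * w n m)
        ≤ (2 * C * ε / (1 - ε)) * ∑ n ∈ s, ‖α n‖ ^ 2 := by
      rw [Finset.mul_sum]
      refine Finset.sum_le_sum fun n _ => ?_
      have : ∑ m ∈ s.erase n, (‖α n‖ ^ 2 * w n m)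
          = ‖α n‖ ^ 2 * (C * ∑ m ∈ s.erase n, ε ^ (n - m).natAbs) := by
        rw [Finset.mul_sum, Finset.mul_sum]
      rw [this]
      have hb := erase_sum_pow_le ε hε0 hε1 s n
      have : C * ∑ m ∈ s.erase n, ε ^ (n - m).natAbs ≤ C * (2 * (ε / (1 - ε))) :=
        mul_le_mul_of_nonneg_left hb hC
      calc ‖α n‖ ^ 2 * (C * ∑ m ∈ s.erase n, ε ^ (n - m).natAbs)
          ≤ ‖α n‖ ^ 2 * (C * (2 * (ε / (1 - ε)))) :=
            mul_le_mul_of_nonneg_left this (by positivity)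
        _ = 2 * C * ε / (1 - ε) * ‖α n‖ ^ 2 := by ring
    calc ∑ n ∈ s, ∑ m ∈ s.erase n, (‖α n‖ * ‖α m‖ * w n m)
        ≤ ∑ n ∈ s, ∑ m ∈ s.erase n,
            (‖α n‖ ^ 2 / 2 * w n m + ‖α m‖ ^ 2 / 2 * w n m) := step1
      _ = ∑ n ∈ s, ∑ m ∈ s.erase n, (‖α n‖ ^ 2 / 2 * w n m)
          + ∑ n ∈ s, ∑ m ∈ s.erase n, (‖α m‖ ^ 2 / 2 * w n m) := by
          rw [← Finset.sum_add_distrib]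
          exact Finset.sum_congr rfl fun n _ => by rw [← Finset.sum_add_distrib]
      _ = ∑ n ∈ s, ∑ m ∈ s.erase n, (‖α n‖ ^ 2 * w n m) := by
          rw [step2, ← Finset.sum_add_distrib]
          refine Finset.sum_congr rfl fun n _ => ?_
          rw [← Finset.sum_add_distrib]
          exact Finset.sum_congr rfl fun m _ => by ring
      _ ≤ (2 * C * ε / (1 - ε)) * ∑ n ∈ s, ‖α n‖ ^ 2 := step3
  -- lower bound for the norm
  have lower : ∑ n ∈ s, ‖α n‖ ^ 2
      - ∑ n ∈ s, ∑ m ∈ s.erase n, (‖α n‖ * ‖α m‖ * w n m)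
      ≤ ‖∑ n ∈ s, α n • f n‖ ^ 2 := by
    rw [expand]
    rw [show ∑ n ∈ s, ∑ m ∈ s, t n m
        = ∑ n ∈ s, (t n n + ∑ m ∈ s.erase n, t n m) from
      Finset.sum_congr rfl fun n hn => (Finset.add_sum_erase s (t n) hn).symm]
    rw [Finset.sum_add_distrib]
    have hdiag : ∑ n ∈ s, t n n = ∑ n ∈ s, ‖α n‖ ^ 2 := Finset.sum_congr rfl diag
    have hcross : ∑ n ∈ s, (-(∑ m ∈ s.erase n, (‖α n‖ * ‖α m‖ * w n m)))
        ≤ ∑ n ∈ s, ∑ m ∈ s.erase n, t n m := by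
      refine Finset.sum_le_sum fun n _ => ?_
      rw [← Finset.sum_neg_distrib]
      refine Finset.sum_le_sum fun m hm => ?_
      exact cross n m (Ne.symm (Finset.mem_erase.mp hm).1)
    rw [Finset.sum_neg_distrib] at hcross
    linarith
  linarith [mul_le_mul_of_nonneg_right (le_refl (1:ℝ))
    (Finset.sum_nonneg (fun n (_ : n ∈ s) => sq_nonneg ‖α n‖)), key, lower,
    sub_mul (1:ℝ) (2 * C * ε / (1 - ε)) (∑ n ∈ s, ‖α n‖ ^ 2)]

/-- For unit vectors `f n` with `|⟨f n, f m⟩| ≤ C ε^{|n-m|}` (`n ≠ m`) and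
`δ := 2Cε/(1-ε) < 1`, any finite linear combination `ψ = Σ α_n f_n` satisfies
`‖ψ‖² ≥ (1-δ) Σ |α_n|²`. -/
theorem norm_sq_linear_combination_ge
    {E : Type*} [NormedAddCommGroup E] [InnerProductSpace ℂ E] [CompleteSpace E]
    (f : ℤ → E) (hnorm : ∀ n, ‖f n‖ = 1) (C ε : ℝ) (hε0 : 0 ≤ ε) (hε1 : ε < 1)
    (hbound : ∀ n m : ℤ, n ≠ m →
      ‖(inner ℂ (f n) (f m) : ℂ)‖ ≤ C * ε ^ (n - m).natAbs)
    (hδ : 2 * C * ε / (1 - ε) < 1)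
    (s : Finset ℤ) (α : ℤ → ℂ) :
    (1 - 2 * C * ε / (1 - ε)) * ∑ n ∈ s, ‖α n‖ ^ 2 ≤
      ‖∑ n ∈ s, α n • f n‖ ^ 2 := by
  rcases le_or_gt 0 C with hC | hC
  · exact aux_bound f hnorm C ε hε0 hε1 hC hbound s α
  · rcases eq_or_lt_of_le hε0 with hε | hε
    · subst hε
      have hb0 : ∀ n m : ℤ, n ≠ m →
          ‖(inner ℂ (f n) (f m) : ℂ)‖ ≤ 0 * (0 : ℝ) ^ (n - m).natAbs := by
        intro n m hnm
        have h := hbound n m hnm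
        have hk : (n - m).natAbs ≠ 0 := by omega
        rw [zero_pow hk] at h ⊢
        simpa using h
      have h := aux_bound f hnorm 0 0 le_rfl (by norm_num) le_rfl hb0 s α
      simpa using h
    · exfalso
      have h := hbound 0 1 (by norm_num)
      have h2 : ((0 : ℤ) - 1).natAbs = 1 := by norm_num
      rw [h2, pow_one] at h
      nlinarith [norm_nonneg (inner ℂ (f 0) (f 1) : ℂ)]
end

section
/- Let ψ and φ be unit vectors in a Hilbert space. Then the operator norm of the difference of the rank-one orthogonal projections onto their spans satisfies ‖|ψ⟩⟨ψ| - |φ⟩⟨φ|‖ = √(1 - |⟨ψ,φ⟩|²). -/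
/-- For unit vectors `ψ, φ` in a Hilbert space, the rank-one orthogonal
projections onto their spans satisfy `‖|ψ⟩⟨ψ| - |φ⟩⟨φ|‖ = √(1 - |⟨ψ,φ⟩|²)`. -/
theorem norm_rank_one_proj_difference
    {E : Type*} [NormedAddCommGroup E] [InnerProductSpace ℂ E] [CompleteSpace E]
    (ψ φ : E) (hψ : ‖ψ‖ = 1) (hφ : ‖φ‖ = 1) :
    ‖(innerSL ℂ ψ).smulRight ψ - (innerSL ℂ φ).smulRight φ‖ =
      Real.sqrt (1 - ‖(inner ℂ ψ φ : ℂ)‖ ^ 2) := by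
  set T := (innerSL ℂ ψ).smulRight ψ - (innerSL ℂ φ).smulRight φ with hTdef
  set c : ℂ := inner ℂ ψ φ with hc
  have hψψ : (inner ℂ ψ ψ : ℂ) = 1 := by
    rw [inner_self_eq_norm_sq_to_K, hψ]; norm_num
  have hφφ : (inner ℂ φ φ : ℂ) = 1 := by
    rw [inner_self_eq_norm_sq_to_K, hφ]; norm_num
  have hφψ : (inner ℂ φ ψ : ℂ) = starRingEnd ℂ c := by rw [hc, inner_conj_symm]
  have hTapp : ∀ x, T x = inner ℂ ψ x • ψ - inner ℂ φ x • φ := fun x => by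
    simp [hTdef]
  set s : ℝ := ‖c‖^2 with hs
  have hsC : (s:ℂ) = c * starRingEnd ℂ c := by
    rw [Complex.mul_conj']; norm_cast
  have hs0 : 0 ≤ s := sq_nonneg _
  have hs1 : s ≤ 1 := by
    have h := norm_inner_le_norm (𝕜 := ℂ) ψ φ
    rw [hψ, hφ, ← hc] at h
    nlinarith [norm_nonneg c]
  have key : ∀ x, T (T (T x)) = ((1 - s : ℝ) : ℂ) • T x := by
    intro x
    simp only [hTapp]
    simp only [inner_sub_right, inner_smul_right, hψψ, hφφ, ← hc, hφψ, smul_sub, smul_smul,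
      one_mul, mul_one]
    match_scalars <;> simp [hsC] <;> ring
  -- self-adjointness
  have hsa : ∀ x y : E, (inner ℂ (T x) y : ℂ) = inner ℂ x (T y) := by
    intro x y
    simp only [hTapp, inner_sub_left, inner_sub_right, inner_smul_left, inner_smul_right,
      ← inner_conj_symm x ψ, ← inner_conj_symm x φ]
    ring
  -- ‖T²x‖² = (1-s)‖Tx‖²
  have hT2 : ∀ x, ‖T (T x)‖^2 = (1 - s) * ‖T x‖^2 := by
    intro x
    have h1 : (inner ℂ (T (T x)) (T (T x)) : ℂ) = inner ℂ (T x) (T (T (T x))) := hsa _ _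
    rw [key] at h1
    rw [inner_smul_right] at h1
    rw [inner_self_eq_norm_sq_to_K, inner_self_eq_norm_sq_to_K] at h1
    have h1' : ((‖T (T x)‖ : ℂ))^2 = ((1-s : ℝ) : ℂ) * ((‖T x‖ : ℂ))^2 := h1
    exact_mod_cast h1' 
  have hT2' : ∀ x, ‖T (T x)‖ = Real.sqrt (1 - s) * ‖T x‖ := by
    intro x
    have h := hT2 x
    have : ‖T (T x)‖ = Real.sqrt ((1-s) * ‖T x‖^2) := by
      rw [← h, Real.sqrt_sq (norm_nonneg _)]
    rw [this, Real.sqrt_mul (by linarith), Real.sqrt_sq (norm_nonneg _)]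
  -- upper bound
  have hub : ∀ x, ‖T x‖ ≤ Real.sqrt (1 - s) * ‖x‖ := by
    intro x
    have h1 : ‖T x‖^2 = (inner ℂ (T x) (T x) : ℂ).re := by
      rw [inner_self_eq_norm_sq_to_K]; norm_cast
    have h2 : (inner ℂ (T x) (T x) : ℂ) = inner ℂ x (T (T x)) := hsa _ _
    have h3 : ‖T x‖^2 ≤ ‖x‖ * ‖T (T x)‖ := by
      rw [h1, h2]
      calc (inner ℂ x (T (T x)) : ℂ).re ≤ ‖(inner ℂ x (T (T x)) : ℂ)‖ := Complex.re_le_norm _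
        _ ≤ ‖x‖ * ‖T (T x)‖ := norm_inner_le_norm _ _
    rw [hT2' x] at h3
    rcases eq_or_lt_of_le (norm_nonneg (T x)) with h0 | h0
    · rw [← h0]
      positivity
    · have : ‖T x‖ * ‖T x‖ ≤ (‖x‖ * Real.sqrt (1-s)) * ‖T x‖ := by nlinarith
      have := le_of_mul_le_mul_right this h0
      linarith [this]
  -- value at ψ
  have hTψ : ‖T ψ‖ = Real.sqrt (1 - s) := by
    have h1 : ‖T ψ‖^2 = (inner ℂ (T ψ) (T ψ) : ℂ).re := by
      rw [inner_self_eq_norm_sq_to_K]; norm_cast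
    have h2 : (inner ℂ (T ψ) (T ψ) : ℂ) = ((1 - s : ℝ) : ℂ) := by
      simp only [hTapp, inner_sub_left, inner_sub_right, inner_smul_left, inner_smul_right,
        hψψ, hφφ, ← hc, hφψ]
      push_cast [hsC]
      ring_nf
      simp
    have h3 : ‖T ψ‖^2 = 1 - s := by rw [h1, h2]; simp
    rw [← h3, Real.sqrt_sq (norm_nonneg _)]
  refine le_antisymm ?_ ?_
  · exact T.opNorm_le_bound (Real.sqrt_nonneg _) hub
  · calc Real.sqrt (1 - s) = ‖T ψ‖ := hTψ.symm
      _ ≤ ‖T‖ * ‖ψ‖ := T.le_opNorm ψ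
      _ = ‖T‖ := by rw [hψ, mul_one]
end

section
/- Let H and H̃ be bounded self-adjoint operators on a Hilbert space with H̃ ≥ 0, and let P be an orthogonal projection. Then for any nonzero vector ψ, ρ(ψ, H - PHP) ≥ -‖H-H̃‖ ρ(ψ, 1-P) - 2(‖[P,[P,H̃]]‖ + 2‖H-H̃‖) ρ(ψ,P)^{1/2} ρ(ψ,1-P)^{1/2}, where ρ(ψ,X)=⟨ψ,Xψ⟩/⟨ψ,ψ⟩. -/
/-- For bounded self-adjoint operators `H, H̃` with `H̃ ≥ 0` and an
orthogonal projection `P`, every nonzero `ψ` satisfies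
`ρ(ψ, H - PHP) ≥ -‖H-H̃‖ ρ(ψ,1-P) - 2(‖[P,[P,H̃]]‖ + 2‖H-H̃‖) ρ(ψ,P)^{1/2} ρ(ψ,1-P)^{1/2}`. -/
theorem rayleigh_decoupling_estimate
    {E : Type*} [NormedAddCommGroup E] [InnerProductSpace ℂ E] [CompleteSpace E]
    (H Ht P : E →L[ℂ] E) (hH : IsSelfAdjoint H) (hHt : IsSelfAdjoint Ht)
    (hHtpos : ∀ ψ : E, 0 ≤ (inner ℂ ψ (Ht ψ) : ℂ).re)
    (hP2 : P * P = P) (hPsa : IsSelfAdjoint P)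
    (ψ : E) (hψ : ψ ≠ 0) :
    -‖H - Ht‖ * ((inner ℂ ψ ((1 - P) ψ) : ℂ).re / ‖ψ‖ ^ 2) -
        2 * (‖P * (P * Ht - Ht * P) - (P * Ht - Ht * P) * P‖ + 2 * ‖H - Ht‖) *
          ((inner ℂ ψ (P ψ) : ℂ).re / ‖ψ‖ ^ 2) ^ (1/2 : ℝ) *
          ((inner ℂ ψ ((1 - P) ψ) : ℂ).re / ‖ψ‖ ^ 2) ^ (1/2 : ℝ) ≤
      (inner ℂ ψ ((H - P * H * P) ψ) : ℂ).re / ‖ψ‖ ^ 2 := by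
  have hn : (0:ℝ) < ‖ψ‖ ^ 2 := by
    have := norm_pos_iff.mpr hψ; positivity
  set Q : E →L[ℂ] E := 1 - P with hQdef
  set K' : E →L[ℂ] E := P * (P * Ht - Ht * P) - (P * Ht - Ht * P) * P with hK'def
  have hPl : ∀ z : E →L[ℂ] E, P * (P * z) = P * z := fun z => by rw [← mul_assoc, hP2]
  have hQ2 : Q * Q = Q := by
    simp only [hQdef, mul_sub, sub_mul, mul_one, one_mul, hP2]
    abel
  have hQsa : IsSelfAdjoint Q := ((IsSelfAdjoint.one (E →L[ℂ] E)).sub hPsa)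
  have hsymH : ∀ u v : E, (inner ℂ (H u) v : ℂ) = inner ℂ u (H v) := fun u v => hH.isSymmetric u v
  have hsymP : ∀ u v : E, (inner ℂ (P u) v : ℂ) = inner ℂ u (P v) := fun u v => hPsa.isSymmetric u v
  have hsymQ : ∀ u v : E, (inner ℂ (Q u) v : ℂ) = inner ℂ u (Q v) := fun u v => hQsa.isSymmetric u v
  have hinner_self : ∀ u : E, (inner ℂ u u : ℂ).re = ‖u‖ ^ 2 := fun u => by
    simpa using inner_self_eq_norm_sq (𝕜 := ℂ) u
  have hP1 : ∀ u : E, P (P u) = P u := fun u => by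
    conv_lhs => rw [← ContinuousLinearMap.mul_apply, hP2]
  have hQ1 : ∀ u : E, Q (Q u) = Q u := fun u => by
    conv_lhs => rw [← ContinuousLinearMap.mul_apply, hQ2]
  -- inner products of projections are norms squared
  have hPx : (inner ℂ ψ (P ψ) : ℂ).re = ‖P ψ‖ ^ 2 := by
    have h1 : (inner ℂ (P ψ) (P ψ) : ℂ) = inner ℂ ψ (P ψ) := by rw [hsymP, hP1]
    rw [← h1]; exact hinner_self _
  have hQx : (inner ℂ ψ (Q ψ) : ℂ).re = ‖Q ψ‖ ^ 2 := by
    have h1 : (inner ℂ (Q ψ) (Q ψ) : ℂ) = inner ℂ ψ (Q ψ) := by rw [hsymQ, hQ1]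
    rw [← h1]; exact hinner_self _
  set D : ℝ := ‖H - Ht‖ with hD
  set K : ℝ := ‖K'‖ with hKd
  have hD0 : 0 ≤ D := norm_nonneg _
  have hK0 : 0 ≤ K := norm_nonneg _
  set a : ℝ := ‖P ψ‖ with ha
  set b : ℝ := ‖Q ψ‖ with hb
  have ha0 : 0 ≤ a := norm_nonneg _
  have hb0 : 0 ≤ b := norm_nonneg _
  -- key operator identity  P Ht Q = P K' Q
  have hkey : P * Ht * Q = P * K' * Q := by
    simp only [hK'def, hQdef, mul_sub, sub_mul, mul_one, one_mul, mul_assoc, hP2, hPl]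
    abel
  -- cross term via commutator
  have hcrossHt : (inner ℂ (P ψ) (Ht (Q ψ)) : ℂ) = inner ℂ (P ψ) (K' (Q ψ)) := by
    calc (inner ℂ (P ψ) (Ht (Q ψ)) : ℂ) = inner ℂ ψ (P (Ht (Q ψ))) := by rw [hsymP]
    _ = inner ℂ ψ ((P * Ht * Q) ψ) := by simp [ContinuousLinearMap.mul_apply]
    _ = inner ℂ ψ ((P * K' * Q) ψ) := by rw [hkey]
    _ = inner ℂ ψ (P (K' (Q ψ))) := by simp [ContinuousLinearMap.mul_apply]
    _ = inner ℂ (P ψ) (K' (Q ψ)) := by rw [hsymP]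
  -- generic bound
  have habs : ∀ (A : E →L[ℂ] E) (u v : E), |(inner ℂ u (A v) : ℂ).re| ≤ ‖A‖ * ‖u‖ * ‖v‖ := by
    intro A u v
    calc |(inner ℂ u (A v) : ℂ).re| ≤ ‖(inner ℂ u (A v) : ℂ)‖ := Complex.abs_re_le_norm _
    _ ≤ ‖u‖ * ‖A v‖ := norm_inner_le_norm _ _
    _ ≤ ‖u‖ * (‖A‖ * ‖v‖) := mul_le_mul_of_nonneg_left (A.le_opNorm v) (norm_nonneg u)
    _ = ‖A‖ * ‖u‖ * ‖v‖ := by ring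
  have hsplit : ∀ u v : E, (inner ℂ u (H v) : ℂ).re
      = (inner ℂ u ((H - Ht) v) : ℂ).re + (inner ℂ u (Ht v) : ℂ).re := by
    intro u v
    have h : (H - Ht) v = H v - Ht v := rfl
    rw [h, inner_sub_right]
    simp
  -- estimate of the cross term
  have hcross : -((K + D) * (a * b)) ≤ (inner ℂ (P ψ) (H (Q ψ)) : ℂ).re := by
    rw [hsplit]
    have h1 := (abs_le.1 (habs (H - Ht) (P ψ) (Q ψ))).1
    have h2 : |(inner ℂ (P ψ) (Ht (Q ψ)) : ℂ).re| ≤ K * a * b := by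
      rw [hcrossHt]; exact habs _ _ _
    have h2' := (abs_le.1 h2).1
    nlinarith
  -- diagonal estimate
  have hdiag : -(D * b ^ 2) ≤ (inner ℂ (Q ψ) (H (Q ψ)) : ℂ).re := by
    rw [hsplit]
    have h1 := (abs_le.1 (habs (H - Ht) (Q ψ) (Q ψ))).1
    have h2 := hHtpos (Q ψ)
    nlinarith
  -- decomposition of the quadratic form
  have hdecomp : (inner ℂ ψ ((H - P * H * P) ψ) : ℂ).re
      = 2 * (inner ℂ (P ψ) (H (Q ψ)) : ℂ).re + (inner ℂ (Q ψ) (H (Q ψ)) : ℂ).re := by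
    have e1 : (inner ℂ ψ ((H - P * H * P) ψ) : ℂ)
        = inner ℂ ψ (H ψ) - inner ℂ ψ (P (H (P ψ))) := by
      have h : (H - P * H * P) ψ = H ψ - P (H (P ψ)) := rfl
      rw [h, inner_sub_right]
    have e2 : (inner ℂ ψ (P (H (P ψ))) : ℂ) = inner ℂ (P ψ) (H (P ψ)) := (hsymP _ _).symm
    have hxy : ψ = P ψ + Q ψ := by simp [hQdef]
    have e3 : (inner ℂ ψ (H ψ) : ℂ)
        = inner ℂ (P ψ) (H (P ψ)) + inner ℂ (P ψ) (H (Q ψ))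
          + inner ℂ (Q ψ) (H (P ψ)) + inner ℂ (Q ψ) (H (Q ψ)) := by
      conv_lhs => rw [hxy]
      rw [map_add, inner_add_left, inner_add_right, inner_add_right]
      ring
    have e4 : (inner ℂ (Q ψ) (H (P ψ)) : ℂ).re = (inner ℂ (P ψ) (H (Q ψ)) : ℂ).re := by
      rw [← hsymH (Q ψ) (P ψ), ← inner_conj_symm]
      exact Complex.conj_re _
    rw [e1, e2, e3]
    simp only [Complex.sub_re, Complex.add_re]
    rw [e4]; ring
  -- the main real inequality
  have hmain : -(D * b ^ 2) - 2 * (K + 2 * D) * a * b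
      ≤ (inner ℂ ψ ((H - P * H * P) ψ) : ℂ).re := by
    rw [hdecomp]
    nlinarith [hcross, hdiag, mul_nonneg (mul_nonneg hD0 ha0) hb0]
  -- rpow computation
  have hrpow : ∀ c : ℝ, 0 ≤ c → ((c ^ 2 / ‖ψ‖ ^ 2 : ℝ)) ^ (1/2 : ℝ) = c / ‖ψ‖ := by
    intro c hc
    have hc' : 0 ≤ c / ‖ψ‖ := div_nonneg hc (norm_nonneg ψ)
    rw [← div_pow, ← Real.rpow_natCast (c / ‖ψ‖) 2, ← Real.rpow_mul hc']
    norm_num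
  have hgQ : (inner ℂ ψ ((1 - P) ψ) : ℂ).re = b ^ 2 := hQx
  rw [hgQ, hPx, hrpow a ha0, hrpow b hb0]
  have hLHS : -D * (b ^ 2 / ‖ψ‖ ^ 2) - 2 * (K + 2 * D) * (a / ‖ψ‖) * (b / ‖ψ‖)
      = (-(D * b ^ 2) - 2 * (K + 2 * D) * a * b) / ‖ψ‖ ^ 2 := by
    have hne : ‖ψ‖ ≠ 0 := norm_ne_zero_iff.mpr hψ
    field_simp
  rw [hLHS]
  exact div_le_div_of_nonneg_right hmain hn.le |>.trans_eq rfl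
end
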